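/- arXiv:2602.19195 — 3 statements merged into one kernel-verified Lean document; each statement's English description precedes it below -/
import Mathlib

section
/- For every real number x with 0 < |x| < π, x·cot(x) = -2 · Σ_{n=0}^{∞} (ζ(2n)/π^{2n}) · x^{2n}, where ζ denotes the Riemann zeta function (with ζ(0) = -1/2 given by analytic continuation) and the series converges. -/
/-!
Put `w = x / π`. For `0 < ‖w‖ < 1` each term `w (1/(w - k) + 1/(w + k)) = -2 (w²/k²) / (1 - w²/k²)`
of the Mittag-Leffler expansion `π w cot (π w) = 1 + ∑_{k ≥ 1} w (1/(w - k) + 1/(w + k))`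
is the geometric series `-2 ∑_{m ≥ 1} (w²/k²)^m`. The double series converges absolutely,
so summing over `k` first gives `-2 ∑_{m ≥ 1} ζ(2m) w^(2m)`, and the constant `1` is the
`m = 0` term `-2 ζ(0)`.
-/

open Real

lemma mem_integerComplement_of_norm_lt_one {w : ℂ} (hw0 : w ≠ 0) (hw : ‖w‖ < 1) :
    w ∈ Complex.integerComplement := by
  rintro ⟨n, rfl⟩
  have hn : |n| < 1 := by exact_mod_cast (by simpa using hw : |(n : ℝ)| < 1)
  simp [Int.abs_lt_one_iff.mp hn] at hw0

lemma hasSum_one_div_nat_add_one_pow {k : ℕ} (hk : 1 < k) :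
    HasSum (fun n : ℕ => 1 / ((n : ℂ) + 1) ^ k) (riemannZeta k) := by
  have hre : 1 < (k : ℂ).re := by norm_cast
  have hsum : Summable fun n : ℕ => 1 / ((n : ℂ) + 1) ^ (k : ℂ) := by
    simpa using (summable_nat_add_iff 1).mpr (Complex.summable_one_div_nat_cpow.mpr hre)
  have := hsum.hasSum
  rw [← zeta_eq_tsum_one_div_nat_add_one_cpow hre] at this
  exact_mod_cast this

lemma hasSum_sq_div_sq_pow (w : ℂ) {m : ℕ} (hm : m ≠ 0) :
    HasSum (fun k : ℕ => (w ^ 2 / ((k : ℂ) + 1) ^ 2) ^ m)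
      (riemannZeta (2 * m) * w ^ (2 * m)) := by
  have hζ := hasSum_one_div_nat_add_one_pow (k := 2 * m) (by omega)
  push_cast at hζ
  refine (hζ.mul_right (w ^ (2 * m))).congr_fun fun k => ?_
  rw [div_pow, ← pow_mul, ← pow_mul, one_div_mul_eq_div]

lemma summable_sq_div_sq_pow_succ {w : ℂ} (hw : ‖w‖ < 1) :
    Summable fun p : ℕ × ℕ => (w ^ 2 / ((p.2 : ℂ) + 1) ^ 2) ^ (p.1 + 1) := by
  have hgeom : Summable fun m : ℕ => (‖w‖ ^ 2) ^ (m + 1) :=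
    (summable_nat_add_iff 1).mpr
      (summable_geometric_of_lt_one (by positivity) (by nlinarith [norm_nonneg w]))
  have hinv : Summable fun k : ℕ => 1 / ((k : ℝ) + 1) ^ 2 := by
    simpa using (summable_nat_add_iff 1).mpr (Real.summable_one_div_nat_pow.mpr one_lt_two)
  refine (hgeom.mul_of_nonneg hinv (fun _ => by positivity) fun _ => by positivity)
    |>.of_norm_bounded fun ⟨m, k⟩ => ?_
  have hk : (1 : ℝ) ≤ ((k : ℝ) + 1) ^ 2 := by nlinarith [(k.cast_nonneg : (0 : ℝ) ≤ k)]
  have hnorm : ‖(k : ℂ) + 1‖ = (k : ℝ) + 1 := by norm_cast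
  calc ‖(w ^ 2 / ((k : ℂ) + 1) ^ 2) ^ (m + 1)‖
      = (‖w‖ ^ 2) ^ (m + 1) * (1 / (((k : ℝ) + 1) ^ 2) ^ (m + 1)) := by
        rw [norm_pow, norm_div, norm_pow, norm_pow, hnorm, div_pow, mul_one_div]
    _ ≤ (‖w‖ ^ 2) ^ (m + 1) * (1 / ((k : ℝ) + 1) ^ 2) := by
        gcongr; exact le_self_pow₀ hk m.succ_ne_zero

lemma hasSum_mul_cotTerm {w : ℂ} (hw : ‖w‖ < 1) (k : ℕ) :
    HasSum (fun m : ℕ => -2 * (w ^ 2 / ((k : ℂ) + 1) ^ 2) ^ (m + 1)) (w * cotTerm w k) := by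
  set q := w ^ 2 / ((k : ℂ) + 1) ^ 2 with hq_def
  have hk : (1 : ℝ) ≤ ‖(k : ℂ) + 1‖ := by norm_cast; simp
  have hq : ‖q‖ < 1 := by
    rw [norm_div, norm_pow, norm_pow, div_lt_one (by positivity)]
    calc ‖w‖ ^ 2 < 1 ^ 2 := by gcongr
      _ ≤ ‖(k : ℂ) + 1‖ ^ 2 := by gcongr
  have hsub : w - (k + 1) ≠ 0 := by
    intro h; rw [sub_eq_zero.mp h] at hw; linarith
  have hadd : w + (k + 1) ≠ 0 := by
    intro h; rw [eq_neg_of_add_eq_zero_left h, norm_neg] at hw; linarith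
  have hval : w * cotTerm w k = -2 * q * (1 - q)⁻¹ := by
    have hk0 : ((k : ℂ) + 1) ≠ 0 := by exact_mod_cast k.succ_ne_zero
    have hden : ((k : ℂ) + 1) ^ 2 - w ^ 2 ≠ 0 := by
      have : ((k : ℂ) + 1) ^ 2 - w ^ 2 = -((w + (k + 1)) * (w - (k + 1))) := by ring
      rw [this]; exact neg_ne_zero.mpr (mul_ne_zero hadd hsub)
    rw [hq_def]
    simp only [cotTerm]
    field_simp
    ring
  rw [hval]
  exact ((hasSum_geometric_of_norm_lt_one hq).mul_left (-2 * q)).congr_fun fun m => by ring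

lemma hasSum_pi_mul_cot_pi_mul_sub_one {w : ℂ} (hw0 : w ≠ 0) (hw : ‖w‖ < 1) :
    HasSum (fun m : ℕ => -2 * (riemannZeta (2 * (m + 1 : ℕ)) * w ^ (2 * (m + 1))))
      (π * w * Complex.cot (π * w) - 1) := by
  have hF := ((summable_sq_div_sq_pow_succ hw).mul_left (-2)).hasSum
  have hcols : HasSum (fun k => w * cotTerm w k) (π * w * Complex.cot (π * w) - 1) := by
    have hw' := mem_integerComplement_of_norm_lt_one hw0 hw
    have h : HasSum (cotTerm w) (π * Complex.cot (π * w) - 1 / w) := by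
      rw [cot_series_rep' hw']; exact (summable_cotTerm hw').hasSum
    have e : π * w * Complex.cot (π * w) - 1 = w * (π * Complex.cot (π * w) - 1 / w) := by
      field_simp
    rw [e]; exact h.mul_left w
  have hcols' := ((Equiv.prodComm ℕ ℕ).hasSum_iff.mpr hF).prod_fiberwise
    fun k => hasSum_mul_cotTerm hw k
  rw [hcols.unique hcols']
  exact hF.prod_fiberwise fun m => (hasSum_sq_div_sq_pow w m.succ_ne_zero).mul_left (-2)

theorem hasSum_pi_mul_cot_pi_mul {w : ℂ} (hw0 : w ≠ 0) (hw : ‖w‖ < 1) :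
    HasSum (fun n : ℕ => -2 * (riemannZeta (2 * n) * w ^ (2 * n)))
      (π * w * Complex.cot (π * w)) := by
  refine (hasSum_nat_add_iff' 1).mp ?_
  have := hasSum_pi_mul_cot_pi_mul_sub_one hw0 hw
  norm_num [riemannZeta_zero] at this ⊢
  exact this

/-- The cotangent series expansion `x·cot(x) = -2 ∑_{n≥0} (ζ(2n)/π^{2n}) x^{2n}`
for `0 < |x| < π`, together with the convergence of the series. -/
theorem x_mul_cot_eq_series (x : ℝ) (hx0 : 0 < |x|) (hxπ : |x| < π) :
    HasSum (fun n : ℕ => -2 * (riemannZeta (2 * n) / (π : ℂ) ^ (2 * n) * (x : ℂ) ^ (2 * n)))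
      ((x * Real.cot x : ℝ) : ℂ) := by
  have hw0 : ((x / π : ℝ) : ℂ) ≠ 0 := by
    exact_mod_cast div_ne_zero (abs_pos.mp hx0) pi_ne_zero
  have hw : ‖((x / π : ℝ) : ℂ)‖ < 1 := by
    rw [Complex.norm_real, norm_div, Real.norm_eq_abs, Real.norm_eq_abs, abs_of_pos pi_pos,
      div_lt_one pi_pos]
    exact hxπ
  convert hasSum_pi_mul_cot_pi_mul hw0 hw using 1
  · ext n; push_cast; ring
  · push_cast [Complex.ofReal_cot]; field_simp
end

section
/- For every nonnegative integer d, the multiple zeta value with d entries all equal to 2 satisfies ζ({2}^d) = π^{2d}/(2d+1)! (with ζ({2}^0) := 1). -/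
open Real Finset

/-- The multiple zeta value `ζ(s₁,…,s_r) = ∑_{1 ≤ k₁ < ⋯ < k_r} ∏ 1/k_i^{s_i}`,
encoded via strictly increasing functions `f : Fin r → ℕ` with `k_i = f i + 1`. -/
noncomputable def mzv (s : List ℕ) : ℝ :=
  ∑' f : {f : Fin s.length → ℕ // StrictMono f},
    ∏ i, (1 : ℝ) / ((f.1 i + 1 : ℕ) : ℝ) ^ (s.get i)

/-- `H(a,b) = ζ({2}^a, 3, {2}^b)`. -/
noncomputable def H (a b : ℕ) : ℝ :=
  mzv (List.replicate a 2 ++ 3 :: List.replicate b 2)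

/-!
`ζ({2}^d)` is the `d`-th elementary symmetric function of the numbers `1/k²`, i.e. up to the
sign `(-1)^d` the coefficient of `x^{2d}` in `∏ₖ (1 - x²/k²)`. By Euler's product this product
is `sin(πx)/(πx) = ∑ (-1)^d (πx)^{2d}/(2d+1)!`, and comparing coefficients of the two power
series in `y = -x²` gives the formula.
-/

open Filter Topology FormalMultilinearSeries

theorem hasFPowerSeriesAt_ofScalarsSum {c : ℕ → ℝ} {y : ℝ} (hy : y ≠ 0)
    (hc : Summable fun n => c n * y ^ n) :
    HasFPowerSeriesAt (ofScalarsSum c) (ofScalars ℝ c) 0 := by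
  have hr : (‖y‖₊ : ENNReal) ≤ (ofScalars ℝ c).radius :=
    (ofScalars ℝ c).le_radius_of_tendsto (l := 0) <| by
      simpa [ofScalars_norm] using hc.tendsto_atTop_zero.norm
  exact ((ofScalars ℝ c).hasFPowerSeriesOnBall
    (lt_of_lt_of_le (by simpa using hy) hr)).hasFPowerSeriesAt

theorem eq_of_hasSum_mul_pow {a b : ℕ → ℝ} {f : ℝ → ℝ} {l : Filter ℝ} [l.NeBot]
    (hl : l ≤ 𝓝[≠] 0) (ha : ∀ᶠ y in l, HasSum (fun n => a n * y ^ n) (f y))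
    (hb : ∀ᶠ y in l, HasSum (fun n => b n * y ^ n) (f y)) : a = b := by
  have series {c : ℕ → ℝ} (hc : ∀ᶠ y in l, HasSum (fun n => c n * y ^ n) (f y)) :
      HasFPowerSeriesAt (ofScalarsSum c) (ofScalars ℝ c) 0 ∧
        ∀ᶠ y in l, ofScalarsSum c y = f y := by
    obtain ⟨y, hyc, hy⟩ := (hc.and (hl self_mem_nhdsWithin)).exists
    refine ⟨hasFPowerSeriesAt_ofScalarsSum hy hyc.summable, hc.mono fun y hy => ?_⟩
    simpa [ofScalarsSum_eq_tsum, mul_comm] using hy.tsum_eq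
  obtain ⟨hpa, hfa⟩ := series ha
  obtain ⟨hpb, hfb⟩ := series hb
  have hfreq : ∃ᶠ y in 𝓝[≠] (0 : ℝ), ofScalarsSum a y = ofScalarsSum b y :=
    ((hfa.and hfb).mono fun y h => h.1.trans h.2.symm).frequently.filter_mono hl
  exact ofScalars_series_injective ℝ ℝ (hpa.eq_formalMultilinearSeries_of_eventually hpb
    ((hpa.analyticAt.frequently_eq_iff_eventually_eq hpb.analyticAt).1 hfreq))

theorem tendsto_powerset_range : Tendsto (fun N => (range N).powerset) atTop atTop :=
  tendsto_atTop_finset_of_monotone (fun _ _ h => powerset_mono.2 (range_subset_range.2 h))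
    fun t => (exists_nat_subset_range t).imp fun _ h => mem_powerset.2 h

theorem summable_prod_finset {a : ℕ → ℝ} (ha : Summable a) :
    Summable fun t : Finset ℕ => ∏ k ∈ t, a k := by
  refine .of_norm (summable_of_sum_le (c := exp (∑' n, ‖a n‖)) (fun _ => norm_nonneg _)
    fun u => ?_)
  obtain ⟨N, hN⟩ := (tendsto_powerset_range.eventually_ge_atTop u).exists
  calc ∑ t ∈ u, ‖∏ k ∈ t, a k‖
      ≤ ∑ t ∈ (range N).powerset, ∏ k ∈ t, ‖a k‖ := by
        simp_rw [norm_prod]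
        exact sum_le_sum_of_subset_of_nonneg hN fun _ _ _ => by positivity
    _ = ∏ n ∈ range N, (1 + ‖a n‖) := (prod_one_add _).symm
    _ ≤ exp (∑ n ∈ range N, ‖a n‖) := prod_one_add_le_exp_sum _ fun _ => norm_nonneg _
    _ ≤ exp (∑' n, ‖a n‖) :=
        exp_le_exp.2 (ha.norm.sum_le_tsum _ fun _ _ => norm_nonneg _)

theorem tendsto_prod_range_one_add {a : ℕ → ℝ} (ha : Summable a) :
    Tendsto (fun N => ∏ n ∈ range N, (1 + a n)) atTop (𝓝 (∑' t : Finset ℕ, ∏ k ∈ t, a k)) := by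
  simpa only [prod_one_add, Function.comp_def] using
    (summable_prod_finset ha).hasSum.comp tendsto_powerset_range

noncomputable def infEsymm (a : ℕ → ℝ) (d : ℕ) : ℝ :=
  ∑' t : {t : Finset ℕ // t.card = d}, ∏ k ∈ t.1, a k

theorem hasSum_pow_mul_infEsymm {a : ℕ → ℝ} (ha : Summable a) (c : ℝ) :
    HasSum (fun d => c ^ d * infEsymm a d) (∑' t : Finset ℕ, ∏ k ∈ t, c * a k) := by
  let e := Equiv.sigmaFiberEquiv (Finset.card (α := ℕ))
  have hσ := e.hasSum_iff.2 (summable_prod_finset (ha.mul_left c)).hasSum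
  refine (hσ.sigma fun d => (hσ.summable.sigma_factor d).hasSum).congr_fun fun d => ?_
  rw [infEsymm, ← tsum_mul_left]
  refine tsum_congr fun t => ?_
  simp [e, prod_mul_distrib, t.2]

theorem tsum_strictMono_prod_eq {I : Type*} [LinearOrder I] (g : I → ℝ) (d : ℕ) :
    ∑' f : {f : Fin d → I // StrictMono f}, ∏ i, g (f.1 i)
      = ∑' t : {t : Finset I // t.card = d}, ∏ k ∈ t.1, g k := by
  let e : {f : Fin d → I // StrictMono f} ≃ (Fin d ↪o I) :=
    { toFun := fun f => OrderEmbedding.ofStrictMono f.1 f.2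
      invFun := fun f => ⟨f, f.strictMono⟩
      left_inv := fun _ => rfl
      right_inv := fun _ => rfl }
  refine Eq.symm (((e.trans Set.powersetCard.ofFinEmbEquiv).tsum_eq
    (fun t : {t : Finset I // t.card = d} => ∏ k ∈ t.1, g k)).symm.trans (tsum_congr fun f => ?_))
  simp only [Equiv.trans_apply, Set.powersetCard.ofFinEmbEquiv_apply,
    Set.powersetCard.val_ofFinEmb, prod_map]
  rfl

noncomputable def invSqSucc (k : ℕ) : ℝ := 1 / ((k : ℝ) + 1) ^ 2

theorem summable_invSqSucc : Summable invSqSucc := by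
  refine ((summable_nat_add_iff 1).2 (summable_one_div_nat_pow.2 one_lt_two)).congr fun k => ?_
  simp [invSqSucc]

theorem mzv_replicate_two (d : ℕ) : mzv (List.replicate d 2) = infEsymm invSqSucc d := by
  simp only [mzv, List.get_eq_getElem, List.getElem_replicate]
  rw [List.length_replicate, infEsymm, ← tsum_strictMono_prod_eq]
  simp [invSqSucc]

theorem hasSum_pow_mul_infEsymm_invSqSucc {x : ℝ} (hx : x ≠ 0) :
    HasSum (fun d => (-x ^ 2) ^ d * infEsymm invSqSucc d) (sin (π * x) / (π * x)) := by
  have hπx : π * x ≠ 0 := mul_ne_zero pi_ne_zero hx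
  have euler : π * x * ∑' t : Finset ℕ, ∏ k ∈ t, -x ^ 2 * invSqSucc k = sin (π * x) := by
    refine tendsto_nhds_unique
      ((tendsto_prod_range_one_add (summable_invSqSucc.mul_left _)).const_mul (π * x))
      ((tendsto_euler_sin_prod x).congr fun N => ?_)
    congr 1
    exact prod_congr rfl fun k _ => by rw [invSqSucc]; ring
  rw [← euler, mul_div_cancel_left₀ _ hπx]
  exact hasSum_pow_mul_infEsymm summable_invSqSucc _

theorem hasSum_pow_mul_pi_pow_div_factorial {x : ℝ} (hx : x ≠ 0) :
    HasSum (fun d => (-x ^ 2) ^ d * (π ^ (2 * d) / (Nat.factorial (2 * d + 1) : ℝ)))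
      (sin (π * x) / (π * x)) := by
  have hπx : π * x ≠ 0 := mul_ne_zero pi_ne_zero hx
  refine ((hasSum_sin (π * x)).div_const (π * x)).congr_fun fun d => ?_
  rw [neg_pow, pow_succ (π * x), pow_mul, pow_mul, mul_pow, mul_pow]
  field_simp

theorem infEsymm_invSqSucc :
    infEsymm invSqSucc = fun d => π ^ (2 * d) / (Nat.factorial (2 * d + 1) : ℝ) := by
  have hne {y : ℝ} (hy : y < 0) : √(-y) ≠ 0 := (sqrt_pos.2 (neg_pos.2 hy)).ne'
  have hsq {y : ℝ} (hy : y < 0) : -√(-y) ^ 2 = y := by rw [sq_sqrt (neg_pos.2 hy).le, neg_neg]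
  refine eq_of_hasSum_mul_pow (f := fun y => sin (π * √(-y)) / (π * √(-y)))
    (nhdsLT_le_nhdsNE 0) ?_ ?_ <;>
    filter_upwards [self_mem_nhdsWithin] with y (hy : y < 0)
  · simpa only [hsq hy, mul_comm] using hasSum_pow_mul_infEsymm_invSqSucc (hne hy)
  · simpa only [hsq hy, mul_comm] using hasSum_pow_mul_pi_pow_div_factorial (hne hy)

/-- `ζ({2}^d) = π^{2d}/(2d+1)!`. -/
theorem mzv_two_rep (d : ℕ) :
    mzv (List.replicate d 2) = π ^ (2 * d) / (Nat.factorial (2 * d + 1) : ℝ) := by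
  rw [mzv_replicate_two, infEsymm_invSqSucc]
end

section
/- For every nonnegative integer n, the multiple t-value with n entries all equal to 2 satisfies t({2}^n) = π^{2n}/(2^{2n} (2n)!) (with t({2}^0) := 1). -/
/-!
`t({2}^n)` is the `n`-th elementary symmetric function `eₙ` of the summable sequence
`aₖ = 1/(2k+1)²`, whose power sums `pⱼ = (1 - 4⁻ʲ) ζ(2j)` are Bernoulli numbers times `π^{2j}`.
Newton's identities pass from the finite truncations of `a` to the limit and determine `eₙ`
recursively from the `pⱼ`. So it suffices that `π^{2n}/(2^{2n}(2n)!)` satisfies the same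
recursion; after the substitution `y = x²` this is a coefficient identity between the
generating functions `x/(eˣ-1)`, `cosh x` and `x sinh x`.
-/

open Real Finset

/-- The multiple t-value `t(s₁,…,s_r) = ∑_{1 ≤ k₁ < ⋯ < k_r} ∏ 1/(2k_i-1)^{s_i}`,
encoded via strictly increasing functions `f : Fin r → ℕ` with `k_i = f i + 1`,
so `2k_i - 1 = 2 f i + 1`. -/
noncomputable def mtv (s : List ℕ) : ℝ :=
  ∑' f : {f : Fin s.length → ℕ // StrictMono f},
    ∏ i, (1 : ℝ) / ((2 * f.1 i + 1 : ℕ) : ℝ) ^ (s.get i)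

/-- `T(a,b) = t({2}^a, 3, {2}^b)`. -/
noncomputable def T (a b : ℕ) : ℝ :=
  mtv (List.replicate a 2 ++ 3 :: List.replicate b 2)

open Filter Topology
open scoped Nat

theorem Finset.mul_sum_powersetCard_prod_eq {ι R : Type*} [CommRing R] (t : Finset ι)
    (a : ι → R) (n : ℕ) :
    n * ∑ s ∈ t.powersetCard n, ∏ k ∈ s, a k = (-1) ^ (n + 1) *
      ∑ x ∈ antidiagonal n with x.1 < n,
        (-1) ^ x.1 * (∑ s ∈ t.powersetCard x.1, ∏ k ∈ s, a k) * ∑ k ∈ t, a k ^ x.2 := by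
  have hesymm (m : ℕ) : MvPolynomial.aeval (fun k : t ↦ a k) (MvPolynomial.esymm t R m) =
      ∑ s ∈ t.powersetCard m, ∏ k ∈ s, a k := by
    rw [MvPolynomial.aeval_esymm_eq_multiset_esymm, ← Finset.esymm_map_val]
    congr 1
    exact Multiset.attach_map_val' t.val a
  have hpsum (m : ℕ) : MvPolynomial.aeval (fun k : t ↦ a k) (MvPolynomial.psum t R m) =
      ∑ k ∈ t, a k ^ m := by
    simp [MvPolynomial.psum, Finset.sum_attach t (fun k ↦ a k ^ m)]
  simpa only [map_mul, map_pow, map_neg, map_one, map_natCast, map_sum, hesymm, hpsum] using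
    congrArg (MvPolynomial.aeval fun k : t ↦ a k) (MvPolynomial.mul_esymm_eq_sum t R n)

def strictMonoEquivPowersetCard (I : Type*) [LinearOrder I] (n : ℕ) :
    {f : Fin n → I // StrictMono f} ≃ Set.powersetCard I n :=
  (Equiv.mk (fun f ↦ OrderEmbedding.ofStrictMono f.1 f.2) (fun g ↦ ⟨g, g.strictMono⟩)
    (fun _ ↦ rfl) (fun _ ↦ rfl)).trans Set.powersetCard.ofFinEmbEquiv

theorem prod_strictMonoEquivPowersetCard {I M : Type*} [LinearOrder I] [CommMonoid M] {n : ℕ}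
    (f : {f : Fin n → I // StrictMono f}) (a : I → M) :
    ∏ k ∈ (strictMonoEquivPowersetCard I n f).1, a k = ∏ i, a (f.1 i) := by
  simp only [strictMonoEquivPowersetCard, Equiv.trans_apply, Set.powersetCard.ofFinEmbEquiv_apply,
    Set.powersetCard.val_ofFinEmb, prod_map]
  rfl

noncomputable def esymmSeries (a : ℕ → ℝ) (n : ℕ) : ℝ :=
  ∑' s : Set.powersetCard ℕ n, ∏ k ∈ s.1, a k

theorem tsum_strictMono_prod_eq_esymmSeries (a : ℕ → ℝ) (n : ℕ) :
    ∑' f : {f : Fin n → ℕ // StrictMono f}, ∏ i, a (f.1 i) = esymmSeries a n := by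
  rw [esymmSeries, ← (strictMonoEquivPowersetCard ℕ n).tsum_eq]
  simp only [prod_strictMonoEquivPowersetCard]

theorem esymmSeries_zero (a : ℕ → ℝ) : esymmSeries a 0 = 1 := by
  rw [esymmSeries, tsum_eq_single ⟨∅, card_empty⟩ fun s hs ↦
    (hs (Subtype.ext (card_eq_zero.mp s.2))).elim, prod_empty]

def NewtonRecursion (a c : ℕ → ℝ) : Prop :=
  ∀ n : ℕ, n * c n = (-1) ^ (n + 1) *
    ∑ x ∈ antidiagonal n with x.1 < n, (-1) ^ x.1 * c x.1 * ∑' k, a k ^ x.2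

variable {a : ℕ → ℝ}

theorem tendsto_sum_powersetCard_range_esymmSeries (ha : 0 ≤ a) (hs : Summable a) (n : ℕ) :
    Tendsto (fun N ↦ ∑ s ∈ (range N).powersetCard n, ∏ k ∈ s, a k) atTop
      (𝓝 (esymmSeries a n)) := by
  have hsum :
      HasSum ((Set.powersetCard ℕ n).indicator fun s ↦ ∏ k ∈ s, a k) (esymmSeries a n) :=
    hasSum_subtype_iff_indicator.mp
      ((summable_finsetProd_of_summable_nonneg ha hs).subtype _).hasSum
  have hexhaust : Tendsto (fun N ↦ (range N).powerset) atTop atTop :=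
    tendsto_atTop_finset_of_monotone (fun _ _ h ↦ powerset_mono.mpr (range_mono h))
      fun s ↦ (exists_nat_subset_range s).imp fun _ h ↦ mem_powerset.mpr h
  refine (hsum.comp hexhaust).congr fun N ↦ ?_
  simp only [Function.comp_apply, Set.indicator_apply, Set.powersetCard, Set.mem_ofPred_eq,
    powersetCard_eq_filter, sum_filter]

theorem Summable.pow_of_nonneg (hs : Summable a) (ha : 0 ≤ a) {j : ℕ} (hj : j ≠ 0) :
    Summable fun k ↦ a k ^ j :=
  hs.of_norm_bounded_eventually <| by
    filter_upwards [hs.tendsto_cofinite_zero.eventually_le_const one_pos] with k hk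
    rw [Real.norm_of_nonneg (pow_nonneg (ha k) j)]
    exact pow_le_of_le_one (ha k) hk hj

theorem newtonRecursion_esymmSeries (ha : 0 ≤ a) (hs : Summable a) :
    NewtonRecursion a (esymmSeries a) := by
  intro n
  have hlim := tendsto_sum_powersetCard_range_esymmSeries ha hs
  refine tendsto_nhds_unique ((hlim n).const_mul (n : ℝ)) ?_
  simp_rw [mul_sum_powersetCard_prod_eq]
  refine (tendsto_finsetSum _ fun x hx ↦ ?_).const_mul _
  have hx2 : x.2 ≠ 0 := by
    rw [mem_filter, HasAntidiagonal.mem_antidiagonal] at hx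
    omega
  exact ((hlim x.1).const_mul _).mul (hs.pow_of_nonneg ha hx2).hasSum.tendsto_sum_nat

theorem esymmSeries_eq_of_newtonRecursion (ha : 0 ≤ a) (hs : Summable a) {c : ℕ → ℝ}
    (h0 : c 0 = 1) (hc : NewtonRecursion a c) : esymmSeries a = c := by
  funext n
  induction n using Nat.strong_induction_on with
  | _ n ih =>
    rcases n.eq_zero_or_pos with rfl | hn
    · rw [esymmSeries_zero, h0]
    · refine mul_left_cancel₀ (Nat.cast_ne_zero.mpr hn.ne') ?_
      rw [newtonRecursion_esymmSeries ha hs, hc]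
      congr 1
      refine sum_congr rfl fun x hx ↦ ?_
      rw [ih x.1 (mem_filter.mp hx).2]

namespace PowerSeries

theorem expand_two_mk_eq {R : Type*} [CommRing R] {f : ℕ → R} {g : R⟦X⟧}
    (heven : ∀ k, coeff (2 * k) g = f k) (hodd : ∀ k, coeff (2 * k + 1) g = 0) :
    expand 2 two_ne_zero (mk f) = g := by
  ext m
  obtain ⟨k, rfl | rfl⟩ := m.even_or_odd'
  · rw [coeff_expand_mul, coeff_mk, heven]
  · rw [coeff_expand_of_not_dvd _ _ _ (by omega), hodd]

theorem coeff_bernoulliPowerSeries (n : ℕ) :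
    coeff n (bernoulliPowerSeries ℚ) = bernoulli n / n ! := by
  simp [bernoulliPowerSeries]

theorem rescale_bernoulliPowerSeries_mul (t : ℚ) :
    rescale t (bernoulliPowerSeries ℚ) * (rescale t (exp ℚ) - 1) = C t * X := by
  simpa using congrArg (rescale t) (bernoulliPowerSeries_mul_exp_sub_one ℚ)

theorem rescale_natCast_exp (n : ℕ) : rescale (n : ℚ) (exp ℚ) = exp ℚ ^ n := by
  induction n with
  | zero => simp
  | succ n ih =>
    rw [Nat.cast_succ, ← exp_mul_exp_eq_exp_add, ih, rescale_one, RingHom.id_apply, pow_succ]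

/-- In terms of `x`: `(4x/(e^{4x}-1) - 2x/(e^{2x}-1) + x) (e^x + e^{-x}) = x (e^x - e^{-x})`. -/
theorem bernoulliPowerSeries_rescale_four_sub_two :
    (rescale 4 (bernoulliPowerSeries ℚ) - rescale 2 (bernoulliPowerSeries ℚ) + X) *
      (exp ℚ + rescale (-1) (exp ℚ)) = X * (exp ℚ - rescale (-1) (exp ℚ)) := by
  have hne : rescale 4 (exp ℚ) - 1 ≠ 0 := fun h ↦ by
    simpa [coeff_rescale, coeff_exp] using congrArg (coeff 1) h
  have h4 := rescale_bernoulliPowerSeries_mul 4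
  have h2 := rescale_bernoulliPowerSeries_mul 2
  have hinv : exp ℚ * rescale (-1) (exp ℚ) = 1 := exp_mul_exp_neg_eq_one
  rw [map_ofNat] at h4 h2
  have he4 : rescale 4 (exp ℚ) = exp ℚ ^ 4 := by exact_mod_cast rescale_natCast_exp 4
  have he2 : rescale 2 (exp ℚ) = exp ℚ ^ 2 := by exact_mod_cast rescale_natCast_exp 2
  rw [he4] at h4 hne
  rw [he2] at h2
  set e := exp ℚ
  set e' := rescale (-1) e
  refine mul_right_cancel₀ hne ?_
  linear_combination (e + e') * h4 - (e + e') * (e ^ 2 + 1) * h2 + 2 * X * (e ^ 2 - 1) * e * hinv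

theorem expand_two_mk_inv_factorial :
    expand 2 two_ne_zero (mk fun k ↦ ((2 * k)! : ℚ)⁻¹) =
      C (1 / 2) * (exp ℚ + rescale (-1) (exp ℚ)) := by
  refine expand_two_mk_eq (fun k ↦ ?_) fun k ↦ ?_
  · norm_num [coeff_rescale, coeff_exp, pow_mul, ← two_mul, ← mul_assoc]
  · simp [coeff_rescale, coeff_exp, pow_succ, pow_mul]

theorem expand_two_mk_bernoulli :
    expand 2 two_ne_zero (mk fun k ↦ (16 ^ k - 4 ^ k) * bernoulli (2 * k) / (2 * k)!) =
      rescale 4 (bernoulliPowerSeries ℚ) - rescale 2 (bernoulliPowerSeries ℚ) + X := by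
  refine expand_two_mk_eq (fun k ↦ ?_) fun k ↦ ?_
  · norm_num [coeff_rescale, coeff_bernoulliPowerSeries, coeff_X, pow_mul, sub_mul, sub_div,
      mul_div_assoc]
  · rcases k.eq_zero_or_pos with rfl | hk
    · norm_num [coeff_rescale, coeff_bernoulliPowerSeries]
    · have hodd : bernoulli (2 * k + 1) = 0 := by
        rw [bernoulli_eq_bernoulli'_of_ne_one (by omega),
          bernoulli'_eq_zero_of_odd (odd_two_mul_add_one k) (by omega)]
      simp [coeff_rescale, coeff_bernoulliPowerSeries, coeff_X, hodd, hk.ne']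

theorem expand_two_mk_mul_inv_factorial :
    expand 2 two_ne_zero (mk fun k ↦ 2 * k / ((2 * k)! : ℚ)) =
      C (1 / 2) * (X * (exp ℚ - rescale (-1) (exp ℚ))) := by
  refine expand_two_mk_eq (fun k ↦ ?_) fun k ↦ ?_
  · rcases k with _ | k
    · simp
    · rw [show 2 * (k + 1) = 2 * k + 1 + 1 by ring, coeff_C_mul, coeff_succ_X_mul]
      norm_num [coeff_rescale, coeff_exp, pow_succ, pow_mul, Nat.factorial_succ]
      field_simp
      ring
  · simp [coeff_rescale, coeff_exp, pow_mul]

end PowerSeries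

open PowerSeries in
/-- The `y`-series identity whose image under `y ↦ x²` is
`bernoulliPowerSeries_rescale_four_sub_two`, read off at `yⁿ`. -/
theorem sum_antidiagonal_inv_factorial_mul_bernoulli (n : ℕ) :
    ∑ x ∈ antidiagonal n,
      ((2 * x.1)! : ℚ)⁻¹ * ((16 ^ x.2 - 4 ^ x.2) * bernoulli (2 * x.2) / (2 * x.2)!) =
      2 * n / (2 * n)! := by
  have h : expand 2 two_ne_zero ((PowerSeries.mk fun k ↦ ((2 * k)! : ℚ)⁻¹) *
      PowerSeries.mk fun k ↦ (16 ^ k - 4 ^ k) * bernoulli (2 * k) / (2 * k)!) =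
      expand 2 two_ne_zero (PowerSeries.mk fun k ↦ 2 * k / ((2 * k)! : ℚ)) := by
    rw [map_mul, expand_two_mk_inv_factorial, expand_two_mk_bernoulli,
      expand_two_mk_mul_inv_factorial]
    linear_combination C (1 / 2 : ℚ) * bernoulliPowerSeries_rescale_four_sub_two
  have hcoeff := congrArg (coeff (2 * n)) h
  rw [coeff_expand_mul, coeff_expand_mul, coeff_mul] at hcoeff
  simpa only [coeff_mk] using hcoeff

theorem HasSum.odd_of_even_eq_mul {f : ℕ → ℝ} {z c : ℝ} (hf : HasSum f z)
    (heven : ∀ k, f (2 * k) = c * f k) : HasSum (fun k ↦ f (2 * k + 1)) ((1 - c) * z) := by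
  have he : HasSum (fun k ↦ f (2 * k)) (c * z) := by simpa only [heven] using hf.mul_left c
  have ho : HasSum (fun k ↦ f (2 * k + 1)) _ :=
    (hf.summable.comp_injective fun a b h ↦ by simpa using h).hasSum
  convert ho using 1
  linarith [hf.unique (he.even_add_odd ho)]

/-- The value is `(1 - 4⁻ʲ) ζ(2j)`, with `ζ(2j)` from `hasSum_zeta_nat`. -/
theorem hasSum_one_div_odd_sq_pow {j : ℕ} (hj : j ≠ 0) :
    HasSum (fun k : ℕ ↦ (1 / ((2 * k + 1 : ℕ) : ℝ) ^ 2) ^ j)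
      ((-1) ^ (j + 1) * (π ^ 2 / 4) ^ j / 2 *
        ((16 ^ j - 4 ^ j) * bernoulli (2 * j) / (2 * j)!)) := by
  have hodd := (hasSum_zeta_nat hj).odd_of_even_eq_mul (c := 1 / 4 ^ j) fun k ↦ by
    rcases k.eq_zero_or_pos with rfl | hk
    · simp [hj]
    · push_cast
      rw [mul_pow, pow_mul]
      field_simp
      norm_num
  have h2 : (2 : ℝ) ^ (2 * j - 1) * 2 = 4 ^ j := by
    rw [← pow_succ, Nat.sub_add_cancel (by omega), pow_mul]
    norm_num
  convert hodd using 1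
  · ext k
    rw [div_pow, one_pow, ← pow_mul, mul_comm 2 j]
  · have h16 : (16 : ℝ) ^ j = 4 ^ j * 4 ^ j := by rw [← mul_pow]; norm_num
    rw [div_pow, ← pow_mul, h16, ← h2]
    field_simp

theorem newtonRecursion_one_div_odd_sq :
    NewtonRecursion (fun k ↦ 1 / ((2 * k + 1 : ℕ) : ℝ) ^ 2)
      (fun n ↦ π ^ (2 * n) / (2 ^ (2 * n) * (2 * n)!)) := by
  intro n
  beta_reduce
  have hc (i : ℕ) :
      π ^ (2 * i) / (2 ^ (2 * i) * (2 * i)!) = (π ^ 2 / 4) ^ i * ((2 * i)! : ℝ)⁻¹ := by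
    rw [div_pow, pow_mul, pow_mul]
    norm_num
    ring
  have hB := congrArg (Rat.cast : ℚ → ℝ) (sum_antidiagonal_inv_factorial_mul_bernoulli n)
  push_cast at hB
  have hterm : ∀ x ∈ {x ∈ antidiagonal n | x.1 < n}, (-1) ^ (n + 1) * ((-1) ^ x.1 *
      (π ^ (2 * x.1) / (2 ^ (2 * x.1) * (2 * x.1)!)) *
        ∑' k : ℕ, (1 / ((2 * k + 1 : ℕ) : ℝ) ^ 2) ^ x.2) = (π ^ 2 / 4) ^ n / 2 *
      (((2 * x.1)! : ℝ)⁻¹ * ((16 ^ x.2 - 4 ^ x.2) * bernoulli (2 * x.2) / (2 * x.2)!)) := by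
    intro x hx
    rw [mem_filter, HasAntidiagonal.mem_antidiagonal] at hx
    rw [(hasSum_one_div_odd_sq_pow (by omega)).tsum_eq, hc]
    have hsign : (-1 : ℝ) ^ (n + 1) * (-1) ^ x.1 * (-1) ^ (x.2 + 1) = 1 := by
      rw [← pow_add, ← pow_add]
      exact Even.neg_one_pow ⟨n + 1, by omega⟩
    have hpow : (π ^ 2 / 4) ^ n = (π ^ 2 / 4) ^ x.1 * (π ^ 2 / 4) ^ x.2 := by
      rw [← pow_add, hx.1]
    rw [hpow]
    linear_combination (π ^ 2 / 4) ^ x.1 * (π ^ 2 / 4) ^ x.2 / 2 *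
      (((2 * x.1)! : ℝ)⁻¹ * ((16 ^ x.2 - 4 ^ x.2) * bernoulli (2 * x.2) / (2 * x.2)!)) * hsign
  rw [mul_sum, sum_congr rfl hterm, ← mul_sum, sum_filter_of_ne fun x hx hne ↦ ?_, hB, hc]
  · field_simp
  · rw [HasAntidiagonal.mem_antidiagonal] at hx
    by_contra hlt
    have hx2 : x.2 = 0 := by omega
    simp [hx2] at hne

/-- `t({2}^n) = π^{2n}/(2^{2n}(2n)!)`. -/
theorem mtv_two_rep (n : ℕ) :
    mtv (List.replicate n 2) = π ^ (2 * n) / (2 ^ (2 * n) * (Nat.factorial (2 * n) : ℝ)) := by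
  set a : ℕ → ℝ := fun k ↦ 1 / ((2 * k + 1 : ℕ) : ℝ) ^ 2
  have ha : 0 ≤ a := fun k ↦ by positivity
  have hs : Summable a := by simpa [a] using (hasSum_one_div_odd_sq_pow one_ne_zero).summable
  have hmtv : mtv (List.replicate n 2) = esymmSeries a (List.replicate n 2).length := by
    rw [mtv, ← tsum_strictMono_prod_eq_esymmSeries]
    simp [a]
  rw [hmtv, List.length_replicate,
    esymmSeries_eq_of_newtonRecursion ha hs (by simp) newtonRecursion_one_div_odd_sq]
end
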